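/- arXiv:math/0511166 — 5 statements merged into one kernel-verified Lean document; each statement's English description precedes it below -/
import Mathlib

section
/- Let X be a real Banach space and let U, V, W be isometric bounded operators on X satisfying the quaternionic relations U² = V² = W² = -Id, UV = -VU = W, VW = -WV = U, WU = -UW = V. Then for every x in X, the distance from x to the linear span of {Ux, Vx, Wx} is at least (2/3)‖x‖. -/
theorem stmt_2 (X : Type*) [NormedAddCommGroup X] [NormedSpace ℝ X] [CompleteSpace X]
    (U V W : X →L[ℝ] X)
    (hUi : ∀ x, ‖U x‖ = ‖x‖) (hVi : ∀ x, ‖V x‖ = ‖x‖) (hWi : ∀ x, ‖W x‖ = ‖x‖)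
    (hU : U ∘L U = -1) (hV : V ∘L V = -1) (hW : W ∘L W = -1)
    (hUV : U ∘L V = W) (hVU : V ∘L U = -W)
    (hVW : V ∘L W = U) (hWV : W ∘L V = -U)
    (hWU : W ∘L U = V) (hUW : U ∘L W = -V)
    (x : X) :
    (2 / 3) * ‖x‖ ≤
      Metric.infDist x (Submodule.span ℝ {U x, V x, W x} : Set X) := by
  -- pointwise versions of the composition identities
  have hUU : ∀ z, U (U z) = -z := fun z => by
    have := DFunLike.congr_fun hU z; simpa using this
  have hVV : ∀ z, V (V z) = -z := fun z => by
    have := DFunLike.congr_fun hV z; simpa using this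
  have hWW : ∀ z, W (W z) = -z := fun z => by
    have := DFunLike.congr_fun hW z; simpa using this
  have hUVp : ∀ z, U (V z) = W z := fun z => DFunLike.congr_fun hUV z
  have hVUp : ∀ z, V (U z) = -W z := fun z => by
    have := DFunLike.congr_fun hVU z; simpa using this
  have hVWp : ∀ z, V (W z) = U z := fun z => DFunLike.congr_fun hVW z
  have hWVp : ∀ z, W (V z) = -U z := fun z => by
    have := DFunLike.congr_fun hWV z; simpa using this
  have hWUp : ∀ z, W (U z) = V z := fun z => DFunLike.congr_fun hWU z
  have hUWp : ∀ z, U (W z) = -V z := fun z => by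
    have := DFunLike.congr_fun hUW z; simpa using this
  -- main estimate for each point of the span
  have main : ∀ y ∈ (Submodule.span ℝ {U x, V x, W x} : Set X),
      (2 / 3) * ‖x‖ ≤ dist x y := by
    intro y hy
    rw [SetLike.mem_coe, show ({U x, V x, W x} : Set X) = insert (U x) {V x, W x} from rfl,
      Submodule.mem_span_insert] at hy
    obtain ⟨a, z, hz, rfl⟩ := hy
    rw [Submodule.mem_span_pair] at hz
    obtain ⟨b, c, rfl⟩ := hz
    set y : X := a • U x + (b • V x + c • W x) with hy_def
    have key : (x - y) + a • U (x - y) + b • V (x - y) + c • W (x - y)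
        = (1 + (a ^ 2 + b ^ 2 + c ^ 2)) • x := by
      simp only [hy_def, map_sub, map_add, map_smul, hUU, hVV, hWW, hUVp, hVUp, hVWp, hWVp,
        hWUp, hUWp]
      module
    have hnorm : (1 + (a ^ 2 + b ^ 2 + c ^ 2)) * ‖x‖
        ≤ (1 + (|a| + |b| + |c|)) * ‖x - y‖ := by
      have h1 : ‖(1 + (a ^ 2 + b ^ 2 + c ^ 2)) • x‖
          = (1 + (a ^ 2 + b ^ 2 + c ^ 2)) * ‖x‖ := by
        rw [norm_smul, Real.norm_eq_abs, abs_of_pos (by positivity)]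
      calc (1 + (a ^ 2 + b ^ 2 + c ^ 2)) * ‖x‖
          = ‖(x - y) + a • U (x - y) + b • V (x - y) + c • W (x - y)‖ := by rw [key, h1]
        _ ≤ ‖x - y‖ + ‖a • U (x - y)‖ + ‖b • V (x - y)‖ + ‖c • W (x - y)‖ := by
            refine le_trans (norm_add_le _ _) ?_
            refine add_le_add (le_trans (norm_add_le _ _) ?_) le_rfl
            exact add_le_add (norm_add_le _ _) le_rfl
        _ = (1 + (|a| + |b| + |c|)) * ‖x - y‖ := by
            rw [norm_smul, norm_smul, norm_smul, hUi, hVi, hWi, Real.norm_eq_abs,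
              Real.norm_eq_abs, Real.norm_eq_abs]; ring
    rw [dist_eq_norm]
    have hx : (0 : ℝ) ≤ ‖x‖ := norm_nonneg x
    have hd : (0 : ℝ) ≤ ‖x - y‖ := norm_nonneg _
    nlinarith [sq_nonneg (|a| - 1/3), sq_nonneg (|b| - 1/3), sq_nonneg (|c| - 1/3),
      sq_abs a, sq_abs b, sq_abs c, mul_nonneg (abs_nonneg a) hd,
      mul_nonneg (abs_nonneg b) hd, mul_nonneg (abs_nonneg c) hd,
      mul_nonneg hx (abs_nonneg a), mul_nonneg hx (abs_nonneg b), mul_nonneg hx (abs_nonneg c)]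
  by_contra hcon
  push_neg at hcon
  have hne : (Submodule.span ℝ {U x, V x, W x} : Set X).Nonempty :=
    ⟨0, Submodule.zero_mem _⟩
  obtain ⟨y, hy, hlt⟩ := (Metric.infDist_lt_iff hne).mp hcon
  exact absurd hlt (not_lt.mpr (main y hy))
end

section
/- Let X be a real Banach space and U, V, W isometric operators on X satisfying the quaternionic relations as above. Then for every x in X with finite norm, there exists a continuous linear functional x* of norm at most 1 such that x*(x) ≥ (1/2)‖x‖ and x*(Ux) = x*(Vx) = x*(Wx) = 0. -/
/-!
The relations say that `1, U, V, W` span a copy of the quaternions inside `X →L[ℝ] X`, i.e.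
an algebra map `ρ : ℍ → (X →L[ℝ] X)` with `‖ρ q‖ ≤ |q₀| + |q₁| + |q₂| + |q₃|`.
Since `ρ (star q) ∘ ρ q = |q|² • 1`, this gives `|q|² ‖x‖ ≤ (|q₀| + … + |q₃|) ‖ρ q x‖` and hence
`|q₀| ‖x‖ ≤ 2 ‖ρ q x‖`. So `ρ q x ↦ ‖x‖ / 2 * q₀` is a well-defined functional of norm at most `1`
on `span {x, U x, V x, W x}`; a Hahn–Banach extension of it is the required functional.
-/

open Quaternion QuaternionAlgebra

theorem exists_strongDual_comp_eq_of_norm_le {𝕜 E X : Type*} [RCLike 𝕜] [AddCommGroup E]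
    [Module 𝕜 E] [NormedAddCommGroup X] [NormedSpace 𝕜 X] (ψ : E →ₗ[𝕜] X) (c : E →ₗ[𝕜] 𝕜)
    {C : ℝ} (hC : 0 ≤ C) (h : ∀ q, ‖c q‖ ≤ C * ‖ψ q‖) :
    ∃ g : StrongDual 𝕜 X, ‖g‖ ≤ C ∧ ∀ q, g (ψ q) = c q := by
  have hker : LinearMap.ker ψ ≤ LinearMap.ker c := fun q hq => by
    simpa [LinearMap.mem_ker.mp hq] using h q
  let f : LinearMap.range ψ →ₗ[𝕜] 𝕜 :=
    (LinearMap.ker ψ).liftQ c hker ∘ₗ ψ.quotKerEquivRange.symm.toLinearMap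
  have hf : ∀ q, f ⟨ψ q, ψ.mem_range_self q⟩ = c q := fun q => by
    simp [f, LinearMap.quotKerEquivRange_symm_apply_image]
  have hfC : ∀ z, ‖f z‖ ≤ C * ‖z‖ := by
    rintro ⟨_, q, rfl⟩
    exact (hf q).symm ▸ h q
  obtain ⟨g, hg, hgf⟩ := exists_extension_norm_eq _ (f.mkContinuous C hfC)
  exact ⟨g, hgf ▸ f.mkContinuous_norm_le hC hfC,
    fun q => (hg ⟨ψ q, ψ.mem_range_self q⟩).trans (hf q)⟩

def QuaternionAlgebra.Basis.ofRelations {R A : Type*} [CommRing R] [Ring A] [Algebra R A]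
    {i j k : A} (hi : i * i = -1) (hj : j * j = -1) (hij : i * j = k) (hji : j * i = -k) :
    Basis A (-1 : R) 0 (-1) where
  i := i
  j := j
  k := k
  i_mul_i := by rw [hi, zero_smul, add_zero, neg_one_smul]
  j_mul_j := by rw [hj, neg_one_smul]
  i_mul_j := hij
  j_mul_i := by rw [hji, zero_smul, zero_sub]

theorem QuaternionAlgebra.Basis.norm_liftHom_le {A : Type*} [SeminormedRing A]
    [NormedAlgebra ℝ A] (B : Basis A (-1 : ℝ) 0 (-1)) (h1 : ‖(1 : A)‖ ≤ 1) (hi : ‖B.i‖ ≤ 1)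
    (hj : ‖B.j‖ ≤ 1) (q : ℍ[ℝ,-1,0,-1]) :
    ‖B.liftHom q‖ ≤ |q.re| + |q.imI| + |q.imJ| + |q.imK| := by
  have hk : ‖B.k‖ ≤ 1 :=
    B.i_mul_j ▸ (norm_mul_le _ _).trans (mul_le_one₀ hi (norm_nonneg _) hj)
  rw [liftHom_apply, lift, Algebra.algebraMap_eq_smul_one]
  refine (norm_add₄_le ..).trans ?_
  simp only [norm_smul, Real.norm_eq_abs]
  gcongr <;> exact mul_le_of_le_one_right (abs_nonneg _) ‹_›

theorem QuaternionAlgebra.re_star_mul_self (q : ℍ[ℝ,-1,0,-1]) :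
    (star q * q).re = q.re ^ 2 + q.imI ^ 2 + q.imJ ^ 2 + q.imK ^ 2 := by
  simp [re_mul]
  ring

theorem abs_mul_sum_abs_le (a b c d : ℝ) :
    |a| * (|a| + |b| + |c| + |d|) ≤ 2 * (a ^ 2 + b ^ 2 + c ^ 2 + d ^ 2) := by
  nlinarith [sq_abs a, sq_abs b, sq_abs c, sq_abs d, sq_nonneg (|a| - 2 * |b|),
    sq_nonneg (|a| - 2 * |c|), sq_nonneg (|a| - 2 * |d|)]

theorem abs_re_mul_norm_le_two_mul_norm_apply {X : Type*} [NormedAddCommGroup X]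
    [NormedSpace ℝ X] (ρ : ℍ[ℝ,-1,0,-1] →ₐ[ℝ] (X →L[ℝ] X))
    (hρ : ∀ q, ‖ρ q‖ ≤ |q.re| + |q.imI| + |q.imJ| + |q.imK|) (q : ℍ[ℝ,-1,0,-1]) (x : X) :
    |q.re| * ‖x‖ ≤ 2 * ‖ρ q x‖ := by
  set S := q.re ^ 2 + q.imI ^ 2 + q.imJ ^ 2 + q.imK ^ 2
  set N := |q.re| + |q.imI| + |q.imJ| + |q.imK|
  have hS : ρ (star q) (ρ q x) = S • x := by
    rw [← mul_apply_eq_comp, ← map_mul, star_mul_eq_coe, re_star_mul_self,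
      ← coe_algebraMap, AlgHom.commutes, Algebra.algebraMap_eq_smul_one]
    rfl
  have hSN : S * ‖x‖ ≤ N * ‖ρ q x‖ :=
    calc S * ‖x‖ = ‖ρ (star q) (ρ q x)‖ := by
          rw [hS, norm_smul, Real.norm_of_nonneg (by positivity)]
      _ ≤ ‖ρ (star q)‖ * ‖ρ q x‖ := (ρ (star q)).le_opNorm _
      _ ≤ N * ‖ρ q x‖ := by gcongr; simpa using hρ (star q)
  rcases (show 0 ≤ S by positivity).eq_or_lt with hS0 | hS0
  · have : q.re = 0 := by nlinarith [sq_nonneg q.imI, sq_nonneg q.imJ, sq_nonneg q.imK]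
    simp [this]
  · refine le_of_mul_le_mul_left ?_ hS0
    calc S * (|q.re| * ‖x‖) = |q.re| * (S * ‖x‖) := by ring
      _ ≤ |q.re| * (N * ‖ρ q x‖) := by gcongr
      _ = |q.re| * N * ‖ρ q x‖ := by ring
      _ ≤ 2 * S * ‖ρ q x‖ := mul_le_mul_of_nonneg_right (abs_mul_sum_abs_le ..) (norm_nonneg _)
      _ = S * (2 * ‖ρ q x‖) := by ring

theorem stmt_3_general (X : Type*) [NormedAddCommGroup X] [NormedSpace ℝ X]
    (U V W : X →L[ℝ] X)
    (hUi : ∀ x, ‖U x‖ = ‖x‖) (hVi : ∀ x, ‖V x‖ = ‖x‖)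
    (hU : U ∘L U = -1) (hV : V ∘L V = -1)
    (hUV : U ∘L V = W) (hVU : V ∘L U = -W)
    (x : X) :
    ∃ f : X →L[ℝ] ℝ, ‖f‖ ≤ 1 ∧ (1 / 2) * ‖x‖ ≤ f x ∧
      f (U x) = 0 ∧ f (V x) = 0 ∧ f (W x) = 0 := by
  let B : Basis (X →L[ℝ] X) (-1 : ℝ) 0 (-1) := .ofRelations hU hV hUV hVU
  have hB : ∀ q, ‖B.liftHom q‖ ≤ |q.re| + |q.imI| + |q.imJ| + |q.imK| :=
    B.norm_liftHom_le ContinuousLinearMap.norm_id_le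
      (U.opNorm_le_bound zero_le_one fun z => (hUi z).trans_le (one_mul _).ge)
      (V.opNorm_le_bound zero_le_one fun z => (hVi z).trans_le (one_mul _).ge)
  obtain ⟨f, hf, hfB⟩ := exists_strongDual_comp_eq_of_norm_le
    ((ContinuousLinearMap.apply ℝ X x).toLinearMap ∘ₗ B.liftHom.toLinearMap)
    ((‖x‖ / 2) • reₗ (-1 : ℝ) 0 (-1)) zero_le_one fun q => by
      have := abs_re_mul_norm_le_two_mul_norm_apply _ hB q x
      simp only [LinearMap.comp_apply, LinearMap.smul_apply, reₗ_apply, smul_eq_mul, norm_mul,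
        Real.norm_eq_abs, abs_div, abs_norm, abs_two, AlgHom.toLinearMap_apply,
        ContinuousLinearMap.coe_coe, ContinuousLinearMap.apply_apply]
      linarith
  refine ⟨f, hf, ?_, ?_, ?_, ?_⟩
  · simpa [Basis.lift_one, mul_comm, div_eq_mul_inv] using (hfB 1).ge
  · simpa [B, Basis.lift, Basis.ofRelations] using hfB ⟨0, 1, 0, 0⟩
  · simpa [B, Basis.lift, Basis.ofRelations] using hfB ⟨0, 0, 1, 0⟩
  · simpa [B, Basis.lift, Basis.ofRelations] using hfB ⟨0, 0, 0, 1⟩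

theorem stmt_3 (X : Type*) [NormedAddCommGroup X] [NormedSpace ℝ X] [CompleteSpace X]
    (U V W : X →L[ℝ] X)
    (hUi : ∀ x, ‖U x‖ = ‖x‖) (hVi : ∀ x, ‖V x‖ = ‖x‖) (hWi : ∀ x, ‖W x‖ = ‖x‖)
    (hU : U ∘L U = -1) (hV : V ∘L V = -1) (hW : W ∘L W = -1)
    (hUV : U ∘L V = W) (hVU : V ∘L U = -W)
    (hVW : V ∘L W = U) (hWV : W ∘L V = -U)
    (hWU : W ∘L U = V) (hUW : U ∘L W = -V)
    (x : X) :
    ∃ f : X →L[ℝ] ℝ, ‖f‖ ≤ 1 ∧ (1 / 2) * ‖x‖ ≤ f x ∧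
      f (U x) = 0 ∧ f (V x) = 0 ∧ f (W x) = 0 :=
  stmt_3_general X U V W hUi hVi hU hV hUV hVU x
end

section
/- Let M be a real 2×2 matrix with M² = -Id. Then there exists an invertible real 2×2 matrix P such that P · J · P⁻¹ = M, where J = [[0, -1], [1, 0]], and moreover the Frobenius norms of P and P⁻¹ are equal and both at most the square root of the ℓ¹-norm of M (the sum of absolute values of the entries of M). -/
/-- The Frobenius norm of a 2×2 real matrix. -/
noncomputable def frobNorm2 (P : Matrix (Fin 2) (Fin 2) ℝ) : ℝ :=
  Real.sqrt (∑ i, ∑ j, (P i j) ^ 2)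

/-- The ℓ¹-norm of a 2×2 real matrix. -/
def l1Norm2 (P : Matrix (Fin 2) (Fin 2) ℝ) : ℝ :=
  ∑ i, ∑ j, |P i j|

/-!
Since `M² = -1`, `M = !![a, b; c, -a]` with `a² + bc = -1`, so `c ≠ 0`. In the basis
`e₀, M e₀` the matrix `M` acts as `J`, so `P₀ = !![1, a; 0, c]` conjugates `J` to `M`. Rescaling
to `P = |c|^(-1/2) • P₀` makes `|det P| = 1`; for a `2 × 2` matrix of determinant `±1` the inverse
is `± adjugate`, which has the same entries up to sign and order, hence the same Frobenius norm.
Finally `‖P‖² = (1 + a² + c²) / |c| = |b| + |c|` because `|b| |c| = 1 + a²`.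
-/

open Matrix

lemma frobNorm2_smul (r : ℝ) (P : Matrix (Fin 2) (Fin 2) ℝ) :
    frobNorm2 (r • P) = |r| * frobNorm2 P := by
  simp only [frobNorm2, Matrix.smul_apply, smul_eq_mul, mul_pow, ← Finset.mul_sum]
  rw [Real.sqrt_mul (sq_nonneg r), Real.sqrt_sq_eq_abs]

lemma frobNorm2_of_sq (a b c d : ℝ) :
    frobNorm2 !![a, b; c, d] ^ 2 = a ^ 2 + b ^ 2 + c ^ 2 + d ^ 2 := by
  rw [frobNorm2, Real.sq_sqrt (by positivity)]
  simp only [Fin.sum_univ_two, of_apply, cons_val', cons_val_zero, cons_val_one, empty_val',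
    cons_val_fin_one]
  ring

lemma frobNorm2_adjugate (P : Matrix (Fin 2) (Fin 2) ℝ) :
    frobNorm2 P.adjugate = frobNorm2 P := by
  simp only [frobNorm2, adjugate_fin_two, Fin.sum_univ_two, of_apply, cons_val', cons_val_zero,
    cons_val_one, empty_val', cons_val_fin_one]
  ring_nf

lemma frobNorm2_inv_of_abs_det_eq_one {P : Matrix (Fin 2) (Fin 2) ℝ} (hP : |P.det| = 1) :
    frobNorm2 P⁻¹ = frobNorm2 P := by
  rw [inv_def, Ring.inverse_eq_inv', frobNorm2_smul, frobNorm2_adjugate, abs_inv, hP, inv_one,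
    one_mul]

lemma mul_mul_nonsing_inv_eq_of_mul_eq_mul {n R : Type*} [Fintype n] [DecidableEq n] [CommRing R]
    {P J M : Matrix n n R} (hP : IsUnit P) (h : M * P = P * J) :
    P * J * P⁻¹ = M := by
  rw [← h, Matrix.mul_assoc, mul_nonsing_inv _ ((isUnit_iff_isUnit_det P).mp hP), Matrix.mul_one]

lemma entries_of_mul_self_eq_neg_one {M : Matrix (Fin 2) (Fin 2) ℝ} (h : M * M = -1) :
    M 1 1 = -M 0 0 ∧ M 0 0 * M 0 0 + M 0 1 * M 1 0 = -1 ∧ M 1 0 ≠ 0 := by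
  have h00 := congrFun (congrFun h 0) 0
  have h10 := congrFun (congrFun h 1) 0
  simp only [mul_apply, Fin.sum_univ_two, Matrix.neg_apply, one_apply_eq, ne_eq, one_ne_zero,
    not_false_eq_true, one_apply_ne, neg_zero] at h00 h10
  have hc : M 1 0 ≠ 0 := by
    rintro hc
    rw [hc] at h00
    nlinarith
  refine ⟨?_, h00, hc⟩
  have : M 1 0 * (M 0 0 + M 1 1) = 0 := by linarith
  linarith [(mul_eq_zero.mp this).resolve_left hc]

noncomputable def cyclicConjugator (M : Matrix (Fin 2) (Fin 2) ℝ) : Matrix (Fin 2) (Fin 2) ℝ :=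
  (√|M 1 0|)⁻¹ • !![1, M 0 0; 0, M 1 0]

section cyclicConjugator

variable {M : Matrix (Fin 2) (Fin 2) ℝ}

lemma mul_cyclicConjugator (h : M * M = -1) :
    M * cyclicConjugator M = cyclicConjugator M * !![0, -1; 1, 0] := by
  obtain ⟨hd, hbc, -⟩ := entries_of_mul_self_eq_neg_one h
  rw [cyclicConjugator, Matrix.mul_smul, Matrix.smul_mul]
  congr 1
  nth_rw 1 [eta_fin_two M]
  rw [mul_fin_two, mul_fin_two, hd, hbc]
  ring_nf

lemma abs_det_cyclicConjugator (hc : M 1 0 ≠ 0) : |(cyclicConjugator M).det| = 1 := by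
  rw [cyclicConjugator, det_smul, det_fin_two_of, Fintype.card_fin, inv_pow,
    Real.sq_sqrt (abs_nonneg _), abs_mul, abs_inv, abs_abs]
  simp [hc]

lemma frobNorm2_cyclicConjugator_sq (h : M * M = -1) :
    frobNorm2 (cyclicConjugator M) ^ 2 = |M 0 1| + |M 1 0| := by
  obtain ⟨-, hbc, hc⟩ := entries_of_mul_self_eq_neg_one h
  have hb : |M 0 1| * |M 1 0| = 1 + M 0 0 ^ 2 := by
    rw [← abs_mul, abs_of_neg (by nlinarith)]
    linarith
  rw [cyclicConjugator, frobNorm2_smul, mul_pow, frobNorm2_of_sq, sq_abs, inv_pow,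
    Real.sq_sqrt (abs_nonneg _), inv_mul_eq_iff_eq_mul₀ (abs_pos.mpr hc).ne']
  linear_combination -hb - sq_abs (M 1 0)

lemma frobNorm2_cyclicConjugator_le (h : M * M = -1) :
    frobNorm2 (cyclicConjugator M) ≤ √(l1Norm2 M) := by
  refine Real.le_sqrt_of_sq_le ?_
  rw [frobNorm2_cyclicConjugator_sq h]
  simp only [l1Norm2, Fin.sum_univ_two]
  linarith [abs_nonneg (M 0 0), abs_nonneg (M 1 1)]

end cyclicConjugator

theorem stmt_5 (M : Matrix (Fin 2) (Fin 2) ℝ) (h : M * M = -1) :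
    ∃ P : Matrix (Fin 2) (Fin 2) ℝ, IsUnit P ∧
      P * !![0, -1; 1, 0] * P⁻¹ = M ∧
      frobNorm2 P = frobNorm2 P⁻¹ ∧
      frobNorm2 P ≤ Real.sqrt (l1Norm2 M) := by
  have hdet := abs_det_cyclicConjugator (entries_of_mul_self_eq_neg_one h).2.2
  have hunit : IsUnit (cyclicConjugator M) :=
    (isUnit_iff_isUnit_det _).mpr (isUnit_iff_ne_zero.mpr fun h0 ↦ by simp [h0] at hdet)
  exact ⟨cyclicConjugator M, hunit,
    mul_mul_nonsing_inv_eq_of_mul_eq_mul hunit (mul_cyclicConjugator h),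
    (frobNorm2_inv_of_abs_det_eq_one hdet).symm, frobNorm2_cyclicConjugator_le h⟩
end

section
/- Let A be an element of a real Banach algebra with unit, and suppose A² = -1 + r with ‖r‖ < 1, where r commutes with A. Define f = A·((1-r)^{-1/2} - 1), where (1-r)^{-1/2} is given by the binomial power series 1 + Σ_{n≥1} c_n rⁿ. Then (A + f)² = -1 and ‖f‖ ≤ ‖A‖·((1-‖r‖)^{-1/2} - 1). -/
/-- Coefficients of the binomial series of `(1-x)^{-1/2}`:
`c n = (2n choose n) / 4^n`, with `c 0 = 1`. -/
noncomputable def invSqrtCoeff (n : ℕ) : ℝ := (Nat.choose (2 * n) n : ℝ) / 4 ^ n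

/-!
Since `c n = (-1)^n * Ring.choose (-1/2) n`, the Chu–Vandermonde identity
`choose (-1/2) ⋆ choose (-1/2) = choose (-1)` says `∑_{i+j=n} c i * c j = 1`, so the series
`S = ∑ c n • r ^ n` squares to the geometric series `(1 - r)⁻¹`. As `A` commutes with
`r = A² + 1`, hence with `S`, we get `A + f = A * S` and
`(A * S)² = A² * S² = -(1 - r) * (1 - r)⁻¹ = -1`.
The norm bound compares `S - 1` termwise with the same series at `‖r‖`, whose sum is the
nonnegative square root of `(1 - ‖r‖)⁻¹`.
-/

open Finset Polynomial

lemma invSqrtCoeff_zero : invSqrtCoeff 0 = 1 := by simp [invSqrtCoeff]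

lemma invSqrtCoeff_nonneg (n : ℕ) : 0 ≤ invSqrtCoeff n := by
  unfold invSqrtCoeff; positivity

lemma invSqrtCoeff_le_one (n : ℕ) : invSqrtCoeff n ≤ 1 := by
  rw [invSqrtCoeff, div_le_one (by positivity), ← Nat.centralBinom_eq_two_mul_choose]
  exact_mod_cast Nat.centralBinom_le_four_pow n

lemma invSqrtCoeff_succ_mul (n : ℕ) :
    invSqrtCoeff (n + 1) * (n + 1) = invSqrtCoeff n * (1 / 2 + n) := by
  have h : ((n + 1 : ℕ) * (n + 1).centralBinom : ℝ) = 2 * (2 * n + 1) * n.centralBinom := by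
    exact_mod_cast Nat.succ_mul_centralBinom_succ n
  simp only [invSqrtCoeff, ← Nat.centralBinom_eq_two_mul_choose]
  push_cast at h
  rw [pow_succ]
  field_simp
  linear_combination 2 * h

lemma factorial_mul_invSqrtCoeff (n : ℕ) :
    n.factorial * invSqrtCoeff n = (ascPochhammer ℝ n).eval (1 / 2) := by
  induction n with
  | zero => simp [invSqrtCoeff_zero]
  | succ n ih =>
    rw [ascPochhammer_succ_eval, ← ih, Nat.factorial_succ]
    push_cast
    linear_combination (n.factorial : ℝ) * invSqrtCoeff_succ_mul n

lemma invSqrtCoeff_eq_multichoose (n : ℕ) :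
    invSqrtCoeff n = Ring.multichoose (1 / 2 : ℝ) n := by
  have h := Ring.factorial_nsmul_multichoose_eq_ascPochhammer (1 / 2 : ℝ) n
  rw [ascPochhammer_smeval_eq_eval, nsmul_eq_mul, ← factorial_mul_invSqrtCoeff] at h
  exact (mul_left_cancel₀ (Nat.cast_ne_zero.2 n.factorial_ne_zero) h).symm

lemma invSqrtCoeff_eq_choose (n : ℕ) :
    invSqrtCoeff n = (-1) ^ n * Ring.choose (-(1 / 2) : ℝ) n := by
  rw [Ring.choose_neg', invSqrtCoeff_eq_multichoose, Units.smul_def, Int.coe_negOnePow_natCast,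
    zsmul_eq_mul]
  push_cast
  rw [← mul_assoc, ← mul_pow]; norm_num

lemma sum_antidiagonal_invSqrtCoeff_mul (n : ℕ) :
    ∑ ij ∈ antidiagonal n, invSqrtCoeff ij.1 * invSqrtCoeff ij.2 = 1 := by
  have h := Ring.add_choose_eq n (Commute.all (-(1 / 2) : ℝ) (-(1 / 2)))
  rw [show -(1 / 2) + -(1 / 2) = -(1 : ℝ) by norm_num, Ring.choose_neg', Ring.multichoose_one,
    Units.smul_def, Int.coe_negOnePow_natCast, zsmul_one] at h
  calc ∑ ij ∈ antidiagonal n, invSqrtCoeff ij.1 * invSqrtCoeff ij.2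
      = (-1) ^ n * ∑ ij ∈ antidiagonal n,
          Ring.choose (-(1 / 2) : ℝ) ij.1 * Ring.choose (-(1 / 2) : ℝ) ij.2 := by
        rw [mul_sum]
        refine sum_congr rfl fun ij hij => ?_
        rw [invSqrtCoeff_eq_choose, invSqrtCoeff_eq_choose, ← mem_antidiagonal.1 hij, pow_add]
        ring
    _ = 1 := by
        rw [← h]; push_cast; rw [← pow_add, ← two_mul, pow_mul]; norm_num

section NormedAlgebra

variable {𝔸 : Type*} [NormedRing 𝔸] [NormedAlgebra ℝ 𝔸]

noncomputable def invSqrtSeries (x : 𝔸) : 𝔸 :=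
  ∑' n, invSqrtCoeff n • x ^ n

lemma summable_norm_invSqrtCoeff_smul_pow {x : 𝔸} (hx : ‖x‖ < 1) :
    Summable fun n => ‖invSqrtCoeff n • x ^ n‖ := by
  refine (summable_norm_geometric_of_norm_lt_one hx).of_nonneg_of_le (fun _ => norm_nonneg _)
    fun n => ?_
  rw [norm_smul, Real.norm_of_nonneg (invSqrtCoeff_nonneg n)]
  exact mul_le_of_le_one_left (norm_nonneg _) (invSqrtCoeff_le_one n)

lemma Commute.invSqrtSeries_right {a x : 𝔸} (h : Commute a x) : Commute a (invSqrtSeries x) :=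
  Commute.tsum_right a fun n => (h.pow_right n).smul_right _

variable [CompleteSpace 𝔸]

lemma invSqrtSeries_mul_self {x : 𝔸} (hx : ‖x‖ < 1) :
    invSqrtSeries x * invSqrtSeries x = ∑' n, x ^ n := by
  rw [invSqrtSeries, tsum_mul_tsum_eq_tsum_sum_antidiagonal_of_summable_norm
    (summable_norm_invSqrtCoeff_smul_pow hx) (summable_norm_invSqrtCoeff_smul_pow hx)]
  refine tsum_congr fun n => ?_
  calc ∑ ij ∈ antidiagonal n, invSqrtCoeff ij.1 • x ^ ij.1 * invSqrtCoeff ij.2 • x ^ ij.2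
      = ∑ ij ∈ antidiagonal n, (invSqrtCoeff ij.1 * invSqrtCoeff ij.2) • x ^ n :=
        sum_congr rfl fun ij hij => by
          rw [smul_mul_smul_comm, ← pow_add, mem_antidiagonal.1 hij]
    _ = x ^ n := by rw [← sum_smul, sum_antidiagonal_invSqrtCoeff_mul, one_smul]

lemma invSqrtSeries_eq_one_add {x : 𝔸} (hx : ‖x‖ < 1) :
    invSqrtSeries x = 1 + ∑' n, invSqrtCoeff (n + 1) • x ^ (n + 1) := by
  rw [invSqrtSeries, (summable_norm_invSqrtCoeff_smul_pow hx).of_norm.tsum_eq_zero_add,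
    invSqrtCoeff_zero, pow_zero, one_smul]

lemma norm_invSqrtSeries_sub_one_le {x : 𝔸} (hx : ‖x‖ < 1) :
    ‖invSqrtSeries x - 1‖ ≤ invSqrtSeries ‖x‖ - 1 := by
  have hx' : ‖‖x‖‖ < 1 := by rwa [norm_norm]
  rw [invSqrtSeries_eq_one_add hx, invSqrtSeries_eq_one_add hx', add_sub_cancel_left,
    add_sub_cancel_left]
  refine tsum_of_norm_bounded
    ((summable_nat_add_iff 1).2 (summable_norm_invSqrtCoeff_smul_pow hx').of_norm).hasSum
    fun n => ?_
  rw [norm_smul, Real.norm_of_nonneg (invSqrtCoeff_nonneg _), smul_eq_mul]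
  exact mul_le_mul_of_nonneg_left (norm_pow_le' x n.succ_pos) (invSqrtCoeff_nonneg _)

end NormedAlgebra

lemma invSqrtSeries_real {t : ℝ} (h0 : 0 ≤ t) (h1 : t < 1) :
    invSqrtSeries t = (1 - t) ^ (-(1 / 2) : ℝ) := by
  have ht : ‖t‖ < 1 := by rwa [Real.norm_of_nonneg h0]
  have hsq : invSqrtSeries t * invSqrtSeries t = (1 - t)⁻¹ := by
    rw [invSqrtSeries_mul_self ht, tsum_geometric_of_lt_one h0 h1]
  have hnonneg : 0 ≤ invSqrtSeries t :=
    tsum_nonneg fun n => smul_nonneg (invSqrtCoeff_nonneg n) (pow_nonneg h0 n)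
  rw [Real.rpow_neg (by linarith), ← Real.sqrt_eq_rpow, ← Real.sqrt_inv, ← hsq,
    Real.sqrt_mul_self hnonneg]

theorem stmt_11 (𝔸 : Type*) [NormedRing 𝔸] [NormedAlgebra ℝ 𝔸] [CompleteSpace 𝔸]
    (A : 𝔸) (r : 𝔸) (hr : r = A * A + 1) (hrn : ‖r‖ < 1)
    (f : 𝔸) (hf : f = A * ((∑' n : ℕ, invSqrtCoeff n • r ^ n) - 1)) :
    (A + f) * (A + f) = -1 ∧ ‖f‖ ≤ ‖A‖ * ((1 - ‖r‖) ^ (-(1 / 2) : ℝ) - 1) := by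
  change f = A * (invSqrtSeries r - 1) at hf
  have hAS : Commute A (invSqrtSeries r) := by
    refine Commute.invSqrtSeries_right ?_
    rw [hr]
    exact ((Commute.refl A).mul_right (Commute.refl A)).add_right (Commute.one_right A)
  constructor
  · have hAf : A + f = A * invSqrtSeries r := by rw [hf]; noncomm_ring
    calc (A + f) * (A + f) = -((1 - r) * (invSqrtSeries r * invSqrtSeries r)) := by
          rw [hAf, mul_assoc, ← mul_assoc (invSqrtSeries r), ← hAS.eq, hr]; noncomm_ring
      _ = -1 := by rw [invSqrtSeries_mul_self hrn, mul_neg_geom_series r hrn]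
  · rw [← invSqrtSeries_real (norm_nonneg r) hrn, hf]
    exact (norm_mul_le _ _).trans
      (mul_le_mul_of_nonneg_left (norm_invSqrtSeries_sub_one_le hrn) (norm_nonneg A))
end

section
/- Let g = (Mₙ) be a bounded sequence of real 2×2 matrices such that Mₙ² + Id → 0 and the sequences ‖Mₙ‖ and ‖Mₙ⁻¹‖ are bounded by C (each Mₙ invertible). Then there exist a sequence (Nₙ) of real 2×2 matrices with Nₙ² = -Id for all n, Mₙ - Nₙ → 0, and an invertible bounded sequence (Pₙ) with ‖Pₙ‖, ‖Pₙ⁻¹‖ bounded, such that Nₙ = Pₙ · J · Pₙ⁻¹ for all n, where J = [[0,-1],[1,0]]. -/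
/-!
Since `det (M² + 1) = (det M - 1)² + (tr M)²`, the hypothesis `M² + 1 → 0` forces `tr M → 0` and
`det M → 1`. The traceless part `M - (tr M / 2)` squares to `-(det M - (tr M)² / 4)`, a scalar
tending to `-1`, so rescaling it by the square root of `det M - (tr M)² / 4` gives square roots `N`
of `-1` with `M - N → 0`. A square root of `-1` has the form `[[p, q], [u, -p]]` with
`p² + q u = -1`, and `P = [[1, p], [0, u]]` conjugates `J` to it; since `|q| |u| ≥ 1`, the norms
of `P` and `P⁻¹` are bounded in terms of that of `N`, which stays bounded along with `M`.
-/

/-- The ℓ¹-norm of a 2×2 real matrix (all norms on `Matrix (Fin 2) (Fin 2) ℝ`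
are equivalent). -/
def matNorm (P : Matrix (Fin 2) (Fin 2) ℝ) : ℝ := ∑ i, ∑ j, |P i j|

open Matrix Filter Topology

local notation "J" => !![(0 : ℝ), -1; 1, 0]

lemma matNorm_nonneg (A : Matrix (Fin 2) (Fin 2) ℝ) : 0 ≤ matNorm A := by
  unfold matNorm; positivity

lemma matNorm_eq (A : Matrix (Fin 2) (Fin 2) ℝ) :
    matNorm A = |A 0 0| + |A 0 1| + (|A 1 0| + |A 1 1|) := by
  simp [matNorm, Fin.sum_univ_two]

lemma matNorm_of (a b c d : ℝ) : matNorm !![a, b; c, d] = |a| + |b| + (|c| + |d|) :=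
  matNorm_eq _

lemma matNorm_add_le (A B : Matrix (Fin 2) (Fin 2) ℝ) :
    matNorm (A + B) ≤ matNorm A + matNorm B := by
  simp only [matNorm, ← Finset.sum_add_distrib]
  gcongr with i _ j _
  exact abs_add_le _ _

lemma matNorm_smul (c : ℝ) (A : Matrix (Fin 2) (Fin 2) ℝ) :
    matNorm (c • A) = |c| * matNorm A := by
  simp only [matNorm, Matrix.smul_apply, smul_eq_mul, abs_mul, ← Finset.mul_sum]

lemma matNorm_neg (A : Matrix (Fin 2) (Fin 2) ℝ) : matNorm (-A) = matNorm A := by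
  simp [matNorm]

lemma matNorm_sub_le (A B : Matrix (Fin 2) (Fin 2) ℝ) :
    matNorm (A - B) ≤ matNorm A + matNorm B := by
  simpa [sub_eq_add_neg, matNorm_neg] using matNorm_add_le A (-B)

lemma matNorm_one : matNorm (1 : Matrix (Fin 2) (Fin 2) ℝ) = 2 := by
  norm_num [matNorm_eq]

lemma abs_det_le_matNorm_sq (A : Matrix (Fin 2) (Fin 2) ℝ) : |A.det| ≤ matNorm A ^ 2 := by
  rw [det_fin_two, matNorm_eq]
  calc |A 0 0 * A 1 1 - A 0 1 * A 1 0| ≤ |A 0 0| * |A 1 1| + |A 0 1| * |A 1 0| := by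
        simpa only [abs_mul] using abs_sub (A 0 0 * A 1 1) (A 0 1 * A 1 0)
    _ ≤ _ := by nlinarith [abs_nonneg (A 0 0), abs_nonneg (A 0 1), abs_nonneg (A 1 0),
        abs_nonneg (A 1 1)]

lemma det_mul_self_add_one (A : Matrix (Fin 2) (Fin 2) ℝ) :
    (A * A + 1).det = (A.det - 1) ^ 2 + A.trace ^ 2 := by
  simp [det_fin_two, trace_fin_two, mul_apply, Fin.sum_univ_two]; ring

lemma sq_det_sub_one_add_sq_trace_le (A : Matrix (Fin 2) (Fin 2) ℝ) :
    (A.det - 1) ^ 2 + A.trace ^ 2 ≤ matNorm (A * A + 1) ^ 2 := by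
  rw [← det_mul_self_add_one]
  exact (le_abs_self _).trans (abs_det_le_matNorm_sq _)

lemma abs_trace_le (A : Matrix (Fin 2) (Fin 2) ℝ) : |A.trace| ≤ matNorm (A * A + 1) :=
  abs_le_of_sq_le_sq (by nlinarith [sq_det_sub_one_add_sq_trace_le A]) (matNorm_nonneg _)

lemma abs_det_sub_one_le (A : Matrix (Fin 2) (Fin 2) ℝ) : |A.det - 1| ≤ matNorm (A * A + 1) :=
  abs_le_of_sq_le_sq (by nlinarith [sq_det_sub_one_add_sq_trace_le A]) (matNorm_nonneg _)

lemma sub_half_trace_mul_self (A : Matrix (Fin 2) (Fin 2) ℝ) :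
    (A - (A.trace / 2) • 1) * (A - (A.trace / 2) • 1) = -(A.det - A.trace ^ 2 / 4) • 1 := by
  ext i j; fin_cases i <;> fin_cases j <;>
    simp [det_fin_two, trace_fin_two, mul_apply, Fin.sum_univ_two] <;> ring

-- `J` only fills in for matrices with a real eigenvalue, which eventually do not occur.
noncomputable def complexStructure (A : Matrix (Fin 2) (Fin 2) ℝ) : Matrix (Fin 2) (Fin 2) ℝ :=
  if 0 < A.det - A.trace ^ 2 / 4 then
    (√(A.det - A.trace ^ 2 / 4))⁻¹ • (A - (A.trace / 2) • 1)
  else J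

lemma complexStructure_mul_self (A : Matrix (Fin 2) (Fin 2) ℝ) :
    complexStructure A * complexStructure A = -1 := by
  unfold complexStructure
  split_ifs with hδ
  · rw [smul_mul_smul_comm, sub_half_trace_mul_self, smul_smul, ← mul_inv, ← sq,
      Real.sq_sqrt hδ.le, mul_neg, inv_mul_cancel₀ hδ.ne', neg_smul, one_smul]
  · ext i j; fin_cases i <;> fin_cases j <;> simp

lemma matNorm_sub_complexStructure_le {A : Matrix (Fin 2) (Fin 2) ℝ}
    (hδ : 0 < A.det - A.trace ^ 2 / 4) :
    matNorm (A - complexStructure A) ≤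
      |A.trace| + |1 - (√(A.det - A.trace ^ 2 / 4))⁻¹| * (matNorm A + |A.trace|) := by
  set s := √(A.det - A.trace ^ 2 / 4)
  have hsplit :
      A - complexStructure A = (A.trace / 2) • 1 + (1 - s⁻¹) • (A - (A.trace / 2) • 1) := by
    rw [complexStructure, if_pos hδ, sub_smul, one_smul]; abel
  have hA : matNorm (A - (A.trace / 2) • 1) ≤ matNorm A + |A.trace| := by
    have := matNorm_sub_le A ((A.trace / 2) • 1)
    rwa [matNorm_smul, matNorm_one, abs_div, abs_two, div_mul_cancel₀ _ two_ne_zero] at this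
  calc matNorm (A - complexStructure A)
      ≤ |A.trace / 2| * 2 + |1 - s⁻¹| * matNorm (A - (A.trace / 2) • 1) := by
        rw [hsplit, ← matNorm_one, ← matNorm_smul, ← matNorm_smul]; exact matNorm_add_le _ _
    _ ≤ |A.trace| + |1 - s⁻¹| * (matNorm A + |A.trace|) := by
        rw [abs_div, abs_two, div_mul_cancel₀ _ two_ne_zero]; gcongr

lemma tendsto_matNorm_sub_complexStructure {ι : Type*} {l : Filter ι}
    {M : ι → Matrix (Fin 2) (Fin 2) ℝ} {C : ℝ} (hM : ∀ i, matNorm (M i) ≤ C)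
    (hsq : Tendsto (fun i => matNorm (M i * M i + 1)) l (𝓝 0)) :
    Tendsto (fun i => matNorm (M i - complexStructure (M i))) l (𝓝 0) := by
  have htr : Tendsto (fun i => (M i).trace) l (𝓝 0) :=
    squeeze_zero_norm (fun i => abs_trace_le (M i)) hsq
  have hdet : Tendsto (fun i => (M i).det) l (𝓝 1) :=
    tendsto_sub_nhds_zero_iff.1 (squeeze_zero_norm (fun i => abs_det_sub_one_le (M i)) hsq)
  have hδ : Tendsto (fun i => (M i).det - (M i).trace ^ 2 / 4) l (𝓝 1) := by
    simpa using hdet.sub ((htr.pow 2).div_const 4)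
  have hs : Tendsto (fun i => √((M i).det - (M i).trace ^ 2 / 4)) l (𝓝 1) := by
    simpa using hδ.sqrt
  have hbound : Tendsto (fun i => |(M i).trace| + |1 - (√((M i).det - (M i).trace ^ 2 / 4))⁻¹| *
      (C + |(M i).trace|)) l (𝓝 0) := by
    simpa using htr.abs.add (((hs.inv₀ one_ne_zero).const_sub 1).abs.mul
      (tendsto_const_nhds.add htr.abs))
  refine squeeze_zero' (.of_forall fun i => matNorm_nonneg _) ?_ hbound
  filter_upwards [hδ.eventually (lt_mem_nhds one_pos)] with i hi
  exact (matNorm_sub_complexStructure_le hi).trans (by gcongr; exact hM i)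

def conjugator (N : Matrix (Fin 2) (Fin 2) ℝ) : Matrix (Fin 2) (Fin 2) ℝ :=
  !![1, N 0 0; 0, N 1 0]

lemma matNorm_conjugator_le (N : Matrix (Fin 2) (Fin 2) ℝ) :
    matNorm (conjugator N) ≤ 1 + matNorm N := by
  rw [conjugator, matNorm_of, matNorm_eq]
  simp only [abs_one, abs_zero]
  linarith [abs_nonneg (N 0 1), abs_nonneg (N 1 1)]

section SquareRootOfNegOne

variable {N : Matrix (Fin 2) (Fin 2) ℝ}

lemma entries_of_mul_self_eq_neg_one_s19 (hN : N * N = -1) :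
    N 1 1 = -N 0 0 ∧ N 0 1 * N 1 0 = -(1 + N 0 0 ^ 2) := by
  have h00 := congrFun₂ hN 0 0
  have h01 := congrFun₂ hN 0 1
  simp [mul_apply, Fin.sum_univ_two] at h00 h01
  have : (N 0 0 + N 1 1) * (N 0 0 ^ 2 + 1) = 0 := by
    linear_combination (N 0 0 + N 1 1) * h00 - N 1 0 * h01
  have hx : N 0 0 + N 1 1 = 0 := by
    rcases mul_eq_zero.1 this with h | h
    · exact h
    · nlinarith [sq_nonneg (N 0 0)]
  exact ⟨by linarith, by linear_combination h00⟩

lemma entry_one_zero_ne_zero (hN : N * N = -1) : N 1 0 ≠ 0 := by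
  intro h
  have := (entries_of_mul_self_eq_neg_one_s19 hN).2
  rw [h, mul_zero] at this
  nlinarith [sq_nonneg (N 0 0)]

lemma isUnit_conjugator (hN : N * N = -1) : IsUnit (conjugator N) := by
  rw [isUnit_iff_isUnit_det, conjugator, det_fin_two_of, one_mul, mul_zero, sub_zero]
  exact (entry_one_zero_ne_zero hN).isUnit

lemma mul_conjugator (hN : N * N = -1) : N * conjugator N = conjugator N * J := by
  obtain ⟨h11, hqu⟩ := entries_of_mul_self_eq_neg_one_s19 hN
  ext i j; fin_cases i <;> fin_cases j <;>
    simp [conjugator, mul_apply, Fin.sum_univ_two, h11] <;> linarith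

lemma eq_conjugator_mul_J_mul_inv (hN : N * N = -1) :
    N = conjugator N * J * (conjugator N)⁻¹ := by
  rw [← mul_conjugator hN, mul_assoc, mul_nonsing_inv _ ((isUnit_iff_isUnit_det _).1
    (isUnit_conjugator hN)), mul_one]

lemma inv_conjugator (hN : N * N = -1) :
    (conjugator N)⁻¹ = !![1, -N 0 0 / N 1 0; 0, (N 1 0)⁻¹] := by
  have hu := entry_one_zero_ne_zero hN
  refine inv_eq_right_inv ?_
  ext i j; fin_cases i <;> fin_cases j <;>
    simp [conjugator, mul_apply, Fin.sum_univ_two, hu, div_eq_mul_inv]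

lemma matNorm_inv_conjugator_le (hN : N * N = -1) :
    matNorm (conjugator N)⁻¹ ≤ 1 + matNorm N + matNorm N ^ 2 := by
  have hinv : |N 1 0|⁻¹ ≤ |N 0 1| := by
    have : 1 ≤ |N 0 1| * |N 1 0| := by
      rw [← abs_mul, (entries_of_mul_self_eq_neg_one_s19 hN).2, abs_neg]
      exact le_abs.2 (Or.inl (by nlinarith [sq_nonneg (N 0 0)]))
    rwa [inv_le_iff_one_le_mul₀ (abs_pos.2 (entry_one_zero_ne_zero hN))]
  rw [inv_conjugator hN, matNorm_of, matNorm_eq, abs_one, abs_zero, abs_div, abs_neg,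
    div_eq_mul_inv, abs_inv]
  have := mul_le_mul_of_nonneg_left hinv (abs_nonneg (N 0 0))
  nlinarith [abs_nonneg (N 0 0), abs_nonneg (N 0 1), abs_nonneg (N 1 0), abs_nonneg (N 1 1)]

end SquareRootOfNegOne

theorem stmt_19_general (M : ℕ → Matrix (Fin 2) (Fin 2) ℝ) (C : ℝ)
    (hM : ∀ n, matNorm (M n) ≤ C)
    (hsq : Filter.Tendsto (fun n => matNorm (M n * M n + 1)) Filter.atTop (nhds 0)) :
    ∃ (N P : ℕ → Matrix (Fin 2) (Fin 2) ℝ),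
      (∀ n, N n * N n = -1) ∧
      Filter.Tendsto (fun n => matNorm (M n - N n)) Filter.atTop (nhds 0) ∧
      (∀ n, IsUnit (P n)) ∧
      (∃ D : ℝ, ∀ n, matNorm (P n) ≤ D ∧ matNorm (P n)⁻¹ ≤ D) ∧
      (∀ n, N n = P n * !![0, -1; 1, 0] * (P n)⁻¹) := by
  set N := fun n => complexStructure (M n)
  have hN : ∀ n, N n * N n = -1 := fun n => complexStructure_mul_self (M n)
  have hMN : Tendsto (fun n => matNorm (M n - N n)) atTop (𝓝 0) :=
    tendsto_matNorm_sub_complexStructure hM hsq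
  obtain ⟨B, hB⟩ : BddAbove (Set.range fun n => matNorm (N n)) := by
    refine (isBoundedUnder_of_eventually_le (a := C + 1) ?_).bddAbove_range
    filter_upwards [hMN.eventually (ge_mem_nhds one_pos)] with n hn
    have := matNorm_sub_le (M n) (M n - N n)
    rw [sub_sub_cancel] at this
    linarith [hM n]
  refine ⟨N, fun n => conjugator (N n), hN, hMN, fun n => isUnit_conjugator (hN n),
    ⟨1 + B + B ^ 2, fun n => ?_⟩, fun n => eq_conjugator_mul_J_mul_inv (hN n)⟩
  have hNB : matNorm (N n) ≤ B := hB ⟨n, rfl⟩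
  have := matNorm_nonneg (N n)
  exact ⟨by nlinarith [matNorm_conjugator_le (N n)],
    by nlinarith [matNorm_inv_conjugator_le (hN n)]⟩

theorem stmt_19 (M : ℕ → Matrix (Fin 2) (Fin 2) ℝ) (C : ℝ)
    (hunit : ∀ n, IsUnit (M n))
    (hM : ∀ n, matNorm (M n) ≤ C) (hMinv : ∀ n, matNorm (M n)⁻¹ ≤ C)
    (hsq : Filter.Tendsto (fun n => matNorm (M n * M n + 1)) Filter.atTop (nhds 0)) :
    ∃ (N P : ℕ → Matrix (Fin 2) (Fin 2) ℝ),
      (∀ n, N n * N n = -1) ∧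
      Filter.Tendsto (fun n => matNorm (M n - N n)) Filter.atTop (nhds 0) ∧
      (∀ n, IsUnit (P n)) ∧
      (∃ D : ℝ, ∀ n, matNorm (P n) ≤ D ∧ matNorm (P n)⁻¹ ≤ D) ∧
      (∀ n, N n = P n * !![0, -1; 1, 0] * (P n)⁻¹) :=
  stmt_19_general M C hM hsq
end
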